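/- arXiv:1306.5918 — 7 statements merged into one kernel-verified Lean document; each statement's English description precedes it below -/
import Mathlib

section
/- Let ℝ^N denote N-dimensional Euclidean space with inner product ⟨·,·⟩ and norm ‖·‖. Let S ⊆ ℝ^N be a linear subspace, let f : ℝ^N → ℝ be differentiable at x ∈ ℝ^N with gradient ∇f(x), let Ψ : ℝ^N → ℝ, and let L > 0, σ > 0, and θ ≥ L + σ. Suppose that f(x + h) ≤ f(x) + ⟨∇f(x), h⟩ + (L/2)‖h‖² for every h ∈ S, and that d ∈ S minimizes the function s ↦ ⟨∇f(x), s⟩ + (θ/2)‖s‖² + Ψ(x + s) over s ∈ S. Then f(x + d) + Ψ(x + d) ≤ f(x) + Ψ(x) − (σ/2)‖d‖². -/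
open scoped RealInnerProductSpace

theorem stmt_2 {N : ℕ}
    (S : Submodule ℝ (EuclideanSpace ℝ (Fin N)))
    (f Ψ : EuclideanSpace ℝ (Fin N) → ℝ)
    (x g : EuclideanSpace ℝ (Fin N))
    (hf : HasGradientAt f g x)
    (L σ θ : ℝ) (hL : 0 < L) (hσ : 0 < σ) (hθ : L + σ ≤ θ)
    (hdesc : ∀ h ∈ S, f (x + h) ≤ f x + ⟪g, h⟫ + L / 2 * ‖h‖ ^ 2)
    (d : EuclideanSpace ℝ (Fin N)) (hd : d ∈ S)
    (hmin : ∀ s ∈ S, ⟪g, d⟫ + θ / 2 * ‖d‖ ^ 2 + Ψ (x + d) ≤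
      ⟪g, s⟫ + θ / 2 * ‖s‖ ^ 2 + Ψ (x + s)) :
    f (x + d) + Ψ (x + d) ≤ f x + Ψ x - σ / 2 * ‖d‖ ^ 2 := by
  have h0 := hmin 0 S.zero_mem
  simp only [inner_zero_right, norm_zero, add_zero, ne_eq, OfNat.ofNat_ne_zero,
    not_false_eq_true, zero_pow, mul_zero, zero_add] at h0
  have h1 := hdesc d hd
  have hn : (0:ℝ) ≤ ‖d‖ ^ 2 := by positivity
  nlinarith
end

section
/- Let ℝ^N denote N-dimensional Euclidean space with norm ‖·‖. Let F : ℝ^N → ℝ be bounded below, let σ > 0 and M ∈ ℕ, and let (x_k)_{k≥0} be a sequence in ℝ^N satisfying F(x_{k+1}) ≤ max_{max(k−M,0) ≤ i ≤ k} F(x_i) − (σ/2)‖d_k‖² for all k ≥ 0, where d_k := x_{k+1} − x_k. Suppose further that F is uniformly continuous on the sublevel set Ω(x_0) = {x ∈ ℝ^N : F(x) ≤ F(x_0)}. Then lim_{k→∞} ‖d_k‖ = 0 and the sequence (F(x_k)) converges to a finite limit. -/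
open Filter

private lemma aux_uc {E : Type*} [MetricSpace E] {F : E → ℝ} {S : Set E}
    (h : UniformContinuousOn F S) (u v : ℕ → E)
    (hu : ∀ k, u k ∈ S) (hv : ∀ k, v k ∈ S)
    (hdist : Tendsto (fun k => dist (u k) (v k)) atTop (nhds 0))
    {l : ℝ} (hFu : Tendsto (fun k => F (u k)) atTop (nhds l)) :
    Tendsto (fun k => F (v k)) atTop (nhds l) := by
  rw [Metric.tendsto_atTop] at hFu ⊢
  intro ε hε
  obtain ⟨δ, hδ, hδ'⟩ := Metric.uniformContinuousOn_iff.mp h (ε/2) (by linarith)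
  obtain ⟨K1, hK1⟩ := hFu (ε/2) (by linarith)
  obtain ⟨K2, hK2⟩ := Metric.tendsto_atTop.mp hdist δ hδ
  refine ⟨max K1 K2, fun n hn => ?_⟩
  have h1 := hK1 n (le_trans (le_max_left _ _) hn)
  have h2 := hK2 n (le_trans (le_max_right _ _) hn)
  have hlt : dist (u n) (v n) < δ := by
    rwa [Real.dist_eq, sub_zero, abs_of_nonneg dist_nonneg] at h2
  have h3 := hδ' (u n) (hu n) (v n) (hv n) hlt
  calc dist (F (v n)) l ≤ dist (F (v n)) (F (u n)) + dist (F (u n)) l := dist_triangle _ _ _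
    _ < ε/2 + ε/2 := by rw [dist_comm] at h3; exact add_lt_add h3 h1
    _ = ε := by ring

theorem stmt_8 {N : ℕ}
    (F : EuclideanSpace ℝ (Fin N) → ℝ)
    (hbdd : BddBelow (Set.range F))
    (σ : ℝ) (hσ : 0 < σ) (M : ℕ)
    (x : ℕ → EuclideanSpace ℝ (Fin N))
    (d : ℕ → EuclideanSpace ℝ (Fin N))
    (hd : ∀ k, d k = x (k + 1) - x k)
    (hdec : ∀ k, F (x (k + 1)) ≤
      (Finset.Icc (k - M) k).sup' (Finset.nonempty_Icc.mpr (Nat.sub_le k M))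
        (fun i => F (x i)) - σ / 2 * ‖d k‖ ^ 2)
    (hunif : UniformContinuousOn F {y | F y ≤ F (x 0)}) :
    Tendsto (fun k => ‖d k‖) atTop (nhds 0) ∧
    ∃ l : ℝ, Tendsto (fun k => F (x k)) atTop (nhds l) := by
  set m : ℕ → ℝ := fun k =>
    (Finset.Icc (k - M) k).sup' (Finset.nonempty_Icc.mpr (Nat.sub_le k M))
      (fun i => F (x i)) with hm_def
  have hdec' : ∀ k, F (x (k + 1)) ≤ m k - σ / 2 * ‖d k‖ ^ 2 := hdec
  have hxm : ∀ k, F (x k) ≤ m k := fun k =>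
    Finset.le_sup' (f := fun i => F (x i)) (Finset.mem_Icc.mpr ⟨Nat.sub_le k M, le_refl k⟩)
  have hm_succ : ∀ k, m (k + 1) ≤ m k := by
    intro k
    apply Finset.sup'_le
    intro i hi
    rw [Finset.mem_Icc] at hi
    rcases Nat.lt_or_ge i (k + 1) with h | h
    · exact Finset.le_sup' (f := fun i => F (x i))
        (Finset.mem_Icc.mpr ⟨by omega, by omega⟩)
    · have : i = k + 1 := by omega
      subst this
      have := hdec' k
      nlinarith [sq_nonneg ‖d k‖, norm_nonneg (d k)]
  have hAnti : Antitone m := antitone_nat_of_succ_le hm_succ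
  have hm0 : m 0 = F (x 0) := by
    simp [hm_def, Nat.zero_sub]
  have hsub : ∀ k, x k ∈ {y | F y ≤ F (x 0)} := by
    intro k
    exact le_trans (hxm k) (le_of_le_of_eq (hAnti (Nat.zero_le k)) hm0)
  obtain ⟨b, hb⟩ := hbdd
  have hmbdd : BddBelow (Set.range m) := by
    refine ⟨b, ?_⟩
    rintro _ ⟨k, rfl⟩
    exact le_trans (hb ⟨x k, rfl⟩) (hxm k)
  have hmconv : Tendsto m atTop (nhds (⨅ k, m k)) := tendsto_atTop_ciInf hAnti hmbdd
  set l : ℝ := ⨅ k, m k with hl_def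
  -- choose argmax
  choose ℓ hℓmem hℓeq using fun k =>
    Finset.exists_mem_eq_sup' (Finset.nonempty_Icc.mpr (Nat.sub_le k M))
      (fun i => F (x i))
  have hℓ_lb : ∀ k, k - M ≤ ℓ k := fun k => (Finset.mem_Icc.mp (hℓmem k)).1
  have hℓ_ub : ∀ k, ℓ k ≤ k := fun k => (Finset.mem_Icc.mp (hℓmem k)).2
  have hℓtop : ∀ c : ℕ, Tendsto (fun k => ℓ k - c) atTop atTop := by
    intro c
    apply tendsto_atTop_mono (f := fun k => k - (M + c))
    · intro k
      have := hℓ_lb k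
      omega
    · exact tendsto_sub_atTop_nat (M + c)
  -- key lemma: if F(x(u k + 1)) → l and u → ∞ then ‖d (u k)‖ → 0
  have key : ∀ u : ℕ → ℕ, Tendsto u atTop atTop →
      Tendsto (fun k => F (x (u k + 1))) atTop (nhds l) →
      Tendsto (fun k => ‖d (u k)‖) atTop (nhds 0) := by
    intro u hu hFu
    have hsq : Tendsto (fun k => ‖d (u k)‖ ^ 2) atTop (nhds 0) := by
      have hg : Tendsto (fun k => 2 / σ * (m (u k) - F (x (u k + 1)))) atTop (nhds 0) := by
        have : Tendsto (fun k => m (u k) - F (x (u k + 1))) atTop (nhds (l - l)) :=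
          (hmconv.comp hu).sub hFu
        rw [sub_self] at this
        simpa using this.const_mul (2 / σ)
      apply squeeze_zero (fun k => sq_nonneg _) _ hg
      intro k
      have := hdec' (u k)
      have h2 : σ / 2 * ‖d (u k)‖ ^ 2 ≤ m (u k) - F (x (u k + 1)) := by linarith
      have hσ2 : (0:ℝ) < σ / 2 := by linarith
      have hσ0 : σ ≠ 0 := ne_of_gt hσ
      have heq : (2:ℝ) / σ * (m (u k) - F (x (u k + 1))) =
          (m (u k) - F (x (u k + 1))) / (σ / 2) := by
        field_simp
      rw [heq, le_div_iff₀ hσ2, mul_comm]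
      exact h2
    have hts := (Real.continuous_sqrt.tendsto 0).comp hsq
    rw [Real.sqrt_zero] at hts
    refine hts.congr fun k => ?_
    show Real.sqrt (‖d (u k)‖ ^ 2) = ‖d (u k)‖
    rw [Real.sqrt_sq (norm_nonneg _)]
  -- induction: F (x (ℓ k - j)) → l for each j
  have Q : ∀ j : ℕ, Tendsto (fun k => F (x (ℓ k - j))) atTop (nhds l) := by
    intro j
    induction j with
    | zero =>
      simp only [Nat.sub_zero]
      refine hmconv.congr fun k => ?_
      exact hℓeq k
    | succ j ih =>
      have hev : ∀ᶠ k in atTop, j + 1 ≤ ℓ k := by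
        rw [eventually_atTop]
        refine ⟨M + j + 1, fun k hk => ?_⟩
        have := hℓ_lb k
        omega
      have hD : Tendsto (fun k => ‖d (ℓ k - (j + 1))‖) atTop (nhds 0) := by
        apply key _ (hℓtop (j + 1))
        apply ih.congr'
        filter_upwards [hev] with k hk
        have hkeq : ℓ k - (j + 1) + 1 = ℓ k - j := by omega
        rw [hkeq]
      apply aux_uc hunif (fun k => x (ℓ k - j)) (fun k => x (ℓ k - (j + 1)))
        (fun k => hsub _) (fun k => hsub _) _ ih
      apply hD.congr'
      filter_upwards [hev] with k hk
      have hkeq : ℓ k - (j + 1) + 1 = ℓ k - j := by omega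
      rw [hd, hkeq, dist_eq_norm]
  -- deduce F (x n) → l
  have hFconv : Tendsto (fun n => F (x n)) atTop (nhds l) := by
    rw [Metric.tendsto_atTop]
    intro ε hε
    have hQ' : ∀ j, ∃ K, ∀ k ≥ K, dist (F (x (ℓ k - j))) l < ε := fun j =>
      Metric.tendsto_atTop.mp (Q j) ε hε
    choose K hK using hQ'
    refine ⟨(Finset.range (M + 2)).sup K, fun n hn => ?_⟩
    set k := n + (M + 1) with hk_def
    have h1 : ℓ k ≤ k := hℓ_ub k
    have h2 : k - M ≤ ℓ k := hℓ_lb k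
    have hn_le : n ≤ ℓ k := by omega
    set j := ℓ k - n with hj_def
    have hjmem : j ∈ Finset.range (M + 2) := Finset.mem_range.mpr (by omega)
    have hxn : n = ℓ k - j := by omega
    rw [hxn]
    apply hK j k
    exact le_trans (le_trans (Finset.le_sup hjmem) hn) (by omega)
  refine ⟨?_, ⟨l, hFconv⟩⟩
  exact key id tendsto_id (hFconv.comp (tendsto_add_atTop_nat 1))
end

section
/- Let ℝ^N denote N-dimensional Euclidean space with inner product ⟨·,·⟩ and norm ‖·‖. Let f : ℝ^N → ℝ be differentiable with ∇f Lipschitz continuous with constant L_f, let Ψ : ℝ^N → ℝ be convex, let x ∈ ℝ^N, and let Θ be a self-adjoint linear map on ℝ^N satisfying α‖u‖² ≤ ⟨u, Θu⟩ ≤ c‖u‖² for all u ∈ ℝ^N, where 0 < α ≤ c. Suppose d̄ minimizes d ↦ ⟨∇f(x), d⟩ + (1/2)⟨d, Θd⟩ + Ψ(x + d) over ℝ^N. Then there exists a subgradient s of Ψ at x̃ := x + d̄ (i.e., Ψ(z) ≥ Ψ(x̃) + ⟨s, z − x̃⟩ for all z) such that ‖∇f(x̃) + s‖ ≤ (c +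 L_f)‖d̄‖. -/
open scoped RealInnerProductSpace

open Filter Set Topology

/-!
Adding the convex function `Ψ(x + ·)` to the quadratic model `q(d) = ⟪g, d⟫ + ½⟪d, Θ d⟫`
and minimising, the first-order optimality condition says that `-(g + Θ d̄) = -∇q(d̄)` is a
subgradient of `Ψ` at `x + d̄`; it follows from convexity along segments, since `q` changes by
`t ⟪g + Θ d̄, v⟫ + O(t²)` in the direction `v`. With this subgradient,
`∇f(x + d̄) + s = (∇f(x + d̄) - ∇f(x)) - Θ d̄`, and the two terms are bounded by `L_f ‖d̄‖`
(Lipschitz gradient) and `c ‖d̄‖` (the operator norm of a positive symmetric map is the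
supremum of its Rayleigh quotient).
-/

variable {E : Type*} [NormedAddCommGroup E] [InnerProductSpace ℝ E]

def HasSubgradientAt (Ψ : E → ℝ) (s y : E) : Prop :=
  ∀ z, Ψ y + ⟪s, z - y⟫ ≤ Ψ z

lemma nonpos_of_forall_le_mul {a b : ℝ} (h : ∀ t : ℝ, 0 < t → t ≤ 1 → a ≤ t * b) : a ≤ 0 := by
  have hlim : Tendsto (fun t : ℝ => t * b) (𝓝[>] 0) (𝓝 0) := by
    simpa using ((continuous_mul_const b).tendsto 0).mono_left nhdsWithin_le_nhds
  refine ge_of_tendsto hlim ?_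
  filter_upwards [Ioo_mem_nhdsGT one_pos] with t ht using h t ht.1 ht.2.le

lemma ConvexOn.le_add_smul_sub {s : Set E} {Ψ : E → ℝ} (hΨ : ConvexOn ℝ s Ψ) {y z : E}
    (hy : y ∈ s) (hz : z ∈ s) {t : ℝ} (ht₀ : 0 ≤ t) (ht₁ : t ≤ 1) :
    Ψ (y + t • (z - y)) ≤ (1 - t) * Ψ y + t * Ψ z := by
  have hpt : y + t • (z - y) = (1 - t) • y + t • z := by module
  rw [hpt]
  exact hΨ.2 hy hz (by linarith) ht₀ (by ring)

lemma LinearMap.IsSymmetric.inner_add_smul_map_add_smul {T : E →ₗ[ℝ] E} (hT : T.IsSymmetric)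
    (d v : E) (t : ℝ) :
    ⟪d + t • v, T (d + t • v)⟫ = ⟪d, T d⟫ + 2 * t * ⟪T d, v⟫ + t ^ 2 * ⟪v, T v⟫ := by
  have hsymm : ⟪d, T v⟫ = ⟪T d, v⟫ := (hT d v).symm
  simp only [map_add, map_smul, inner_add_left, inner_add_right, real_inner_smul_left,
    real_inner_smul_right, hsymm, real_inner_comm v (T d)]
  ring

theorem ConvexOn.hasSubgradientAt_of_isMin_add_quadratic {Ψ : E → ℝ} (hΨ : ConvexOn ℝ univ Ψ)
    {T : E →ₗ[ℝ] E} (hT : T.IsSymmetric) {g x d : E}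
    (hmin : ∀ d', ⟪g, d⟫ + 1 / 2 * ⟪d, T d⟫ + Ψ (x + d) ≤
      ⟪g, d'⟫ + 1 / 2 * ⟪d', T d'⟫ + Ψ (x + d')) :
    HasSubgradientAt Ψ (-(g + T d)) (x + d) := by
  intro z
  set v := z - (x + d)
  suffices Ψ (x + d) - ⟪g, v⟫ - ⟪T d, v⟫ - Ψ z ≤ 0 by
    rw [inner_neg_left, inner_add_left]
    linarith
  refine nonpos_of_forall_le_mul (b := ⟪v, T v⟫ / 2) fun t ht₀ ht₁ => ?_
  have hstep := hmin (d + t • v)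
  have hconv := hΨ.le_add_smul_sub (mem_univ (x + d)) (mem_univ z) ht₀.le ht₁
  rw [hT.inner_add_smul_map_add_smul, inner_add_right, real_inner_smul_right, ← add_assoc] at hstep
  refine le_of_mul_le_mul_left ?_ ht₀
  linarith

lemma LinearMap.IsPositive.norm_apply_le [FiniteDimensional ℝ E] {T : E →ₗ[ℝ] E}
    (hT : T.IsPositive) {c : ℝ} (hc : ∀ u, ⟪u, T u⟫ ≤ c * ‖u‖ ^ 2) (u : E) :
    ‖T u‖ ≤ c * ‖u‖ := by
  rcases eq_or_ne u 0 with rfl | hu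
  · simp
  have hc₀ : 0 ≤ c :=
    nonneg_of_mul_nonneg_left ((hT.inner_nonneg_right u).trans (hc u)) (by positivity)
  set T' := LinearMap.toContinuousLinearMap T
  have hT' : ‖T'‖ ≤ c := by
    rw [T'.norm_eq_iSup_rayleighQuotient hT.isSymmetric]
    refine ciSup_le fun y => ?_
    have hy : ⟪T y, y⟫ ≤ c * ‖y‖ ^ 2 := real_inner_comm (T y) y ▸ hc y
    rw [ContinuousLinearMap.rayleighQuotient, ContinuousLinearMap.reApplyInnerSelf_apply,
      RCLike.re_to_real, abs_div, abs_sq]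
    change |⟪T y, y⟫| / ‖y‖ ^ 2 ≤ c
    rw [abs_of_nonneg (hT.inner_nonneg_left y)]
    exact div_le_of_le_mul₀ (by positivity) hc₀ hy
  calc ‖T u‖ = ‖T' u‖ := rfl
    _ ≤ ‖T'‖ * ‖u‖ := T'.le_opNorm u
    _ ≤ c * ‖u‖ := by gcongr

theorem stmt_11_general {N : ℕ}
    (Ψ : EuclideanSpace ℝ (Fin N) → ℝ)
    (gradf : EuclideanSpace ℝ (Fin N) → EuclideanSpace ℝ (Fin N))
    (Lf : ℝ)
    (hlip : ∀ y z, ‖gradf y - gradf z‖ ≤ Lf * ‖y - z‖)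
    (hΨ : ConvexOn ℝ Set.univ Ψ)
    (x : EuclideanSpace ℝ (Fin N))
    (Θ : EuclideanSpace ℝ (Fin N) →ₗ[ℝ] EuclideanSpace ℝ (Fin N))
    (hΘsym : Θ.IsSymmetric)
    (α c : ℝ) (hα : 0 < α)
    (hΘlb : ∀ u, α * ‖u‖ ^ 2 ≤ ⟪u, Θ u⟫)
    (hΘub : ∀ u, ⟪u, Θ u⟫ ≤ c * ‖u‖ ^ 2)
    (dbar : EuclideanSpace ℝ (Fin N))
    (hdbar : ∀ d, ⟪gradf x, dbar⟫ + 1 / 2 * ⟪dbar, Θ dbar⟫ + Ψ (x + dbar) ≤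
      ⟪gradf x, d⟫ + 1 / 2 * ⟪d, Θ d⟫ + Ψ (x + d)) :
    ∃ s : EuclideanSpace ℝ (Fin N),
      (∀ z, Ψ z ≥ Ψ (x + dbar) + ⟪s, z - (x + dbar)⟫) ∧
      ‖gradf (x + dbar) + s‖ ≤ (c + Lf) * ‖dbar‖ := by
  have hΘ : Θ.IsPositive :=
    ⟨hΘsym, fun u => real_inner_comm u (Θ u) ▸ (by positivity : 0 ≤ α * ‖u‖ ^ 2).trans (hΘlb u)⟩
  refine ⟨-(gradf x + Θ dbar), hΨ.hasSubgradientAt_of_isMin_add_quadratic hΘsym hdbar, ?_⟩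
  calc ‖gradf (x + dbar) + -(gradf x + Θ dbar)‖
        = ‖(gradf (x + dbar) - gradf x) - Θ dbar‖ := by congr 1; abel
    _ ≤ ‖gradf (x + dbar) - gradf x‖ + ‖Θ dbar‖ := norm_sub_le _ _
    _ ≤ Lf * ‖dbar‖ + c * ‖dbar‖ := by
        gcongr
        · simpa using hlip (x + dbar) x
        · exact hΘ.norm_apply_le hΘub dbar
    _ = (c + Lf) * ‖dbar‖ := by ring

theorem stmt_11 {N : ℕ}
    (f Ψ : EuclideanSpace ℝ (Fin N) → ℝ)
    (gradf : EuclideanSpace ℝ (Fin N) → EuclideanSpace ℝ (Fin N))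
    (hf : ∀ y, HasGradientAt f (gradf y) y)
    (Lf : ℝ) (hLf : 0 ≤ Lf)
    (hlip : ∀ y z, ‖gradf y - gradf z‖ ≤ Lf * ‖y - z‖)
    (hΨ : ConvexOn ℝ Set.univ Ψ)
    (x : EuclideanSpace ℝ (Fin N))
    (Θ : EuclideanSpace ℝ (Fin N) →ₗ[ℝ] EuclideanSpace ℝ (Fin N))
    (hΘsym : Θ.IsSymmetric)
    (α c : ℝ) (hα : 0 < α) (hαc : α ≤ c)
    (hΘlb : ∀ u, α * ‖u‖ ^ 2 ≤ ⟪u, Θ u⟫)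
    (hΘub : ∀ u, ⟪u, Θ u⟫ ≤ c * ‖u‖ ^ 2)
    (dbar : EuclideanSpace ℝ (Fin N))
    (hdbar : ∀ d, ⟪gradf x, dbar⟫ + 1 / 2 * ⟪dbar, Θ dbar⟫ + Ψ (x + dbar) ≤
      ⟪gradf x, d⟫ + 1 / 2 * ⟪d, Θ d⟫ + Ψ (x + d)) :
    ∃ s : EuclideanSpace ℝ (Fin N),
      (∀ z, Ψ z ≥ Ψ (x + dbar) + ⟪s, z - (x + dbar)⟫) ∧
      ‖gradf (x + dbar) + s‖ ≤ (c + Lf) * ‖dbar‖ :=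
  stmt_11_general Ψ gradf Lf hlip hΨ x Θ hΘsym α c hα hΘlb hΘub dbar hdbar
end

section
/- Let ℝ^N denote N-dimensional Euclidean space with inner product ⟨·,·⟩ and norm ‖·‖. Let f : ℝ^N → ℝ be differentiable with ∇f Lipschitz continuous with constant L_f, let Ψ : ℝ^N → ℝ, let x ∈ ℝ^N, and let Θ be a self-adjoint linear map on ℝ^N satisfying ⟨u, Θu⟩ ≥ α‖u‖² for all u ∈ ℝ^N, where α > 0. Suppose d̄ minimizes d ↦ ⟨∇f(x), d⟩ + (1/2)⟨d, Θd⟩ + Ψ(x + d) over ℝ^N, and set F = f + Ψ. Then F(x + d̄) ≤ F(x) + ((L_f − α)/2)‖d̄‖². -/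
/-!
Along the segment `t ↦ x + t • d`, the Lipschitz bound on `∇f` makes the derivative of
`f (x + t • d)` exceed `⟪∇f x, d⟫` by at most `L t ‖d‖²`, whence the descent inequality
`f (x + d) ≤ f x + ⟪∇f x, d⟫ + (L / 2) ‖d‖²`. Comparing the proximal model at its minimizer `d̄`
with its value at `0` gives `⟪∇f x, d̄⟫ + (α / 2) ‖d̄‖² + Ψ (x + d̄) ≤ Ψ x`, and adding the two
inequalities yields the claim.
-/

open scoped RealInnerProductSpace

variable {E : Type*} [NormedAddCommGroup E] [InnerProductSpace ℝ E]

theorem HasGradientAt.hasDerivAt_comp_add_smul [CompleteSpace E] {f : E → ℝ} {g x d : E}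
    {t : ℝ} (hf : HasGradientAt f g (x + t • d)) :
    HasDerivAt (fun s : ℝ => f (x + s • d)) ⟪g, d⟫ t := by
  have hline : HasDerivAt (fun s : ℝ => x + s • d) d t := by
    simpa using ((hasDerivAt_id t).smul_const d).const_add x
  have := hf.hasFDerivAt.comp_hasDerivAt t hline
  simp only [InnerProductSpace.toDual_apply_apply] at this
  exact this

theorem inner_sub_gradient_le_of_lipschitz {g : E → E} {L : ℝ}
    (hlip : ∀ y z, ‖g y - g z‖ ≤ L * ‖y - z‖) (x d : E) {t : ℝ} (ht : 0 ≤ t) :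
    ⟪g (x + t • d), d⟫ - ⟪g x, d⟫ ≤ L * t * ‖d‖ ^ 2 :=
  calc ⟪g (x + t • d), d⟫ - ⟪g x, d⟫ = ⟪g (x + t • d) - g x, d⟫ := (inner_sub_left _ _ _).symm
    _ ≤ ‖g (x + t • d) - g x‖ * ‖d‖ := real_inner_le_norm _ _
    _ ≤ L * ‖x + t • d - x‖ * ‖d‖ := by gcongr; exact hlip _ _
    _ = L * t * ‖d‖ ^ 2 := by
      rw [add_sub_cancel_left, norm_smul, Real.norm_of_nonneg ht]; ring

theorem le_add_inner_add_sq_of_lipschitz_gradient [CompleteSpace E] {f : E → ℝ} {g : E → E}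
    {L : ℝ} (hf : ∀ y, HasGradientAt f (g y) y) (hlip : ∀ y z, ‖g y - g z‖ ≤ L * ‖y - z‖)
    (x d : E) :
    f (x + d) ≤ f x + ⟪g x, d⟫ + L / 2 * ‖d‖ ^ 2 := by
  set φ : ℝ → ℝ := fun t => f (x + t • d) - t * ⟪g x, d⟫ - L / 2 * t ^ 2 * ‖d‖ ^ 2
  have hφ : ∀ t, HasDerivAt φ (⟪g (x + t • d), d⟫ - ⟪g x, d⟫ - L * t * ‖d‖ ^ 2) t := by
    intro t
    have hsq : HasDerivAt (fun s : ℝ => L / 2 * s ^ 2 * ‖d‖ ^ 2) (L * t * ‖d‖ ^ 2) t := by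
      refine (((hasDerivAt_pow 2 t).const_mul (L / 2)).mul_const (‖d‖ ^ 2)).congr_deriv ?_
      rw [Nat.add_one_sub_one, pow_one, Nat.cast_ofNat]
      ring
    exact (((hf _).hasDerivAt_comp_add_smul).sub
      ((hasDerivAt_id t).mul_const _ |>.congr_deriv (one_mul _))).sub hsq
  have hanti : AntitoneOn φ (Set.Icc 0 1) := by
    refine antitoneOn_of_deriv_nonpos (convex_Icc 0 1)
      (fun t _ => (hφ t).continuousAt.continuousWithinAt)
      (fun t _ => (hφ t).differentiableAt.differentiableWithinAt) fun t ht => ?_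
    rw [interior_Icc] at ht
    rw [(hφ t).deriv]
    linarith [inner_sub_gradient_le_of_lipschitz hlip x d ht.1.le]
  have h10 : φ 1 ≤ φ 0 := hanti (by norm_num) (by norm_num) zero_le_one
  simp only [φ, one_smul, zero_smul, add_zero, one_pow, one_mul, zero_mul, mul_zero, sub_zero,
    ne_eq, OfNat.ofNat_ne_zero, not_false_eq_true, zero_pow] at h10
  linarith

theorem inner_add_half_mul_sq_add_le_of_minimizes_prox_model {Ψ : E → ℝ} {v x dbar : E} {α : ℝ}
    {Θ : E →ₗ[ℝ] E} (hΘlb : ∀ u, α * ‖u‖ ^ 2 ≤ ⟪u, Θ u⟫)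
    (hdbar : ∀ d, ⟪v, dbar⟫ + 1 / 2 * ⟪dbar, Θ dbar⟫ + Ψ (x + dbar) ≤
      ⟪v, d⟫ + 1 / 2 * ⟪d, Θ d⟫ + Ψ (x + d)) :
    ⟪v, dbar⟫ + α / 2 * ‖dbar‖ ^ 2 + Ψ (x + dbar) ≤ Ψ x := by
  have hzero := hdbar 0
  simp only [inner_zero_right, map_zero, mul_zero, add_zero, zero_add] at hzero
  linarith [hΘlb dbar]

theorem stmt_12_general {N : ℕ}
    (f Ψ : EuclideanSpace ℝ (Fin N) → ℝ)
    (gradf : EuclideanSpace ℝ (Fin N) → EuclideanSpace ℝ (Fin N))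
    (hf : ∀ y, HasGradientAt f (gradf y) y)
    (Lf : ℝ)
    (hlip : ∀ y z, ‖gradf y - gradf z‖ ≤ Lf * ‖y - z‖)
    (x : EuclideanSpace ℝ (Fin N))
    (Θ : EuclideanSpace ℝ (Fin N) →ₗ[ℝ] EuclideanSpace ℝ (Fin N))
    (α : ℝ)
    (hΘlb : ∀ u, α * ‖u‖ ^ 2 ≤ ⟪u, Θ u⟫)
    (dbar : EuclideanSpace ℝ (Fin N))
    (hdbar : ∀ d, ⟪gradf x, dbar⟫ + 1 / 2 * ⟪dbar, Θ dbar⟫ + Ψ (x + dbar) ≤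
      ⟪gradf x, d⟫ + 1 / 2 * ⟪d, Θ d⟫ + Ψ (x + d))
    (F : EuclideanSpace ℝ (Fin N) → ℝ) (hF : F = f + Ψ) :
    F (x + dbar) ≤ F x + (Lf - α) / 2 * ‖dbar‖ ^ 2 := by
  subst hF
  have hdescent := le_add_inner_add_sq_of_lipschitz_gradient hf hlip x dbar
  have hprox := inner_add_half_mul_sq_add_le_of_minimizes_prox_model hΘlb hdbar
  simp only [Pi.add_apply]
  linarith

theorem stmt_12 {N : ℕ}
    (f Ψ : EuclideanSpace ℝ (Fin N) → ℝ)
    (gradf : EuclideanSpace ℝ (Fin N) → EuclideanSpace ℝ (Fin N))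
    (hf : ∀ y, HasGradientAt f (gradf y) y)
    (Lf : ℝ) (hLf : 0 ≤ Lf)
    (hlip : ∀ y z, ‖gradf y - gradf z‖ ≤ Lf * ‖y - z‖)
    (x : EuclideanSpace ℝ (Fin N))
    (Θ : EuclideanSpace ℝ (Fin N) →ₗ[ℝ] EuclideanSpace ℝ (Fin N))
    (hΘsym : Θ.IsSymmetric)
    (α : ℝ) (hα : 0 < α)
    (hΘlb : ∀ u, α * ‖u‖ ^ 2 ≤ ⟪u, Θ u⟫)
    (dbar : EuclideanSpace ℝ (Fin N))
    (hdbar : ∀ d, ⟪gradf x, dbar⟫ + 1 / 2 * ⟪dbar, Θ dbar⟫ + Ψ (x + dbar) ≤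
      ⟪gradf x, d⟫ + 1 / 2 * ⟪d, Θ d⟫ + Ψ (x + d))
    (F : EuclideanSpace ℝ (Fin N) → ℝ) (hF : F = f + Ψ) :
    F (x + dbar) ≤ F x + (Lf - α) / 2 * ‖dbar‖ ^ 2 :=
  stmt_12_general f Ψ gradf hf Lf hlip x Θ α hΘlb dbar hdbar F hF
end

section
/- Let α > 0 and let (Δ_k)_{k≥0} be a sequence of nonnegative real numbers satisfying Δ_k ≤ Δ_{k−1} − α Δ_k² for all k ≥ 1. Then Δ_k ≤ max{2/α, Δ_0}/(k + 1) for all k ≥ 0. -/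
theorem stmt_13 (α : ℝ) (hα : 0 < α) (Δ : ℕ → ℝ)
    (hnonneg : ∀ k, 0 ≤ Δ k)
    (hrec : ∀ k ≥ 1, Δ k ≤ Δ (k - 1) - α * (Δ k) ^ 2) :
    ∀ k, Δ k ≤ max (2 / α) (Δ 0) / (k + 1) := by
  set M := max (2 / α) (Δ 0) with hM
  have hM2 : 2 / α ≤ M := le_max_left _ _
  have hMpos : 0 < M := lt_of_lt_of_le (div_pos two_pos hα) hM2
  have hαM : 2 ≤ α * M := by
    rw [div_le_iff₀ hα] at hM2; nlinarith
  intro k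
  induction k with
  | zero =>
    simp only [Nat.cast_zero, zero_add, div_one]
    exact le_max_right _ _
  | succ k ih =>
    have hd := hrec (k+1) (by omega)
    simp only [Nat.add_sub_cancel] at hd
    by_contra hcon
    push_neg at hcon
    have hk1 : (0:ℝ) < (k:ℝ) + 1 := by positivity
    have hk2 : (0:ℝ) < (k:ℝ) + 1 + 1 := by positivity
    have h1 : M / ((k:ℝ)+1+1) < Δ (k+1) := by
      push_cast at hcon ⊢; linarith
    have h2 : Δ k ≤ M / ((k:ℝ)+1) := ih
    rw [div_lt_iff₀ hk2] at h1
    rw [le_div_iff₀ hk1] at h2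
    have hdn : 0 < Δ (k+1) := by nlinarith
    have hA : 2 ≤ α * (Δ (k+1) * ((k:ℝ)+1+1)) := le_trans hαM (by nlinarith)
    have hB : Δ (k+1) * ((k:ℝ)+1) + α * Δ (k+1)^2 * ((k:ℝ)+1) < Δ (k+1) * ((k:ℝ)+1+1) := by
      nlinarith [mul_le_mul_of_nonneg_right hd hk1.le]
    nlinarith [mul_le_mul_of_nonneg_right hA (mul_nonneg hdn.le hk1.le),
      mul_lt_mul_of_pos_right hB hk2, mul_nonneg hdn.le (Nat.cast_nonneg k)]
end

section
/- Let α > 0 and let (D_k)_{k≥0} be a sequence of positive real numbers satisfying D_k ≥ (D_{k−1} + √(D_{k−1}² + 4α D_{k−1}))/2 for all k ≥ 1. Set β = min{α/2, D_0}. Then D_k ≥ β(k + 1) for all k ≥ 0. -/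
theorem stmt_14 (α : ℝ) (hα : 0 < α) (D : ℕ → ℝ)
    (hpos : ∀ k, 0 < D k)
    (hrec : ∀ k ≥ 1, (D (k - 1) + Real.sqrt ((D (k - 1)) ^ 2 + 4 * α * D (k - 1))) / 2 ≤ D k) :
    ∀ k, min (α / 2) (D 0) * (k + 1) ≤ D k := by
  set β := min (α / 2) (D 0) with hβ
  have hβα : β ≤ α / 2 := min_le_left _ _
  have hβ0 : 0 < β := lt_min (by linarith) (hpos 0)
  intro k
  induction k with
  | zero => simp only [Nat.cast_zero, zero_add, mul_one]; exact min_le_right _ _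
  | succ n ih =>
    have hrec' := hrec (n + 1) (Nat.le_add_left 1 n)
    simp only [Nat.add_sub_cancel] at hrec'
    have hDn : β ≤ D n := by
      have : β * 1 ≤ β * (n + 1) := by
        apply mul_le_mul_of_nonneg_left _ hβ0.le
        have : (0:ℝ) ≤ n := Nat.cast_nonneg n
        linarith
      linarith [ih]
    have hsq : D n + 2 * β ≤ Real.sqrt ((D n) ^ 2 + 4 * α * (D n)) := by
      have h1 : (D n + 2 * β) ^ 2 ≤ (D n) ^ 2 + 4 * α * (D n) := by
        have hb2 : β * β ≤ β * D n := mul_le_mul_of_nonneg_left hDn hβ0.le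
        have hbd : β * D n ≤ (α / 2) * D n :=
          mul_le_mul_of_nonneg_right hβα (hpos n).le
        nlinarith
      calc D n + 2 * β = Real.sqrt ((D n + 2 * β) ^ 2) := by
            rw [Real.sqrt_sq (by nlinarith [hpos n])]
        _ ≤ _ := Real.sqrt_le_sqrt h1
    have : D n + β ≤ D (n + 1) := by
      have := hrec'
      linarith
    have := ih
    push_cast
    push_cast at this
    linarith
end

section
/- Let ℝ^N denote N-dimensional Euclidean space with inner product ⟨·,·⟩ and norm ‖·‖. Let f : ℝ^N → ℝ be convex and differentiable, let Ψ : ℝ^N → ℝ be convex and Lipschitz continuous with constant L_Ψ, and set F = f + Ψ. Let x* be a global minimizer of F over ℝ^N, and let x ∈ ℝ^N satisfy ‖∇f(x)‖ ≤ q and ‖x − x*‖ ≤ r for some q, r ≥ 0. Let Θ be a self-adjoint linear map on ℝ^N satisfying 0 ≤ ⟨u, Θu⟩ ≤ c‖u‖² for all u ∈ ℝ^N, where c > 0, and suppose d̄ minimizes d ↦ ⟨∇f(x), d⟩ + (1/2)⟨d, Θd⟩ + Ψ(x + d) over ℝ^N. Then F(x) − F(x*) ≤ (L_Ψ + q + c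 r)·‖d̄‖. -/
open scoped RealInnerProductSpace

lemma grad_ineq_aux {N : ℕ} {f : EuclideanSpace ℝ (Fin N) → ℝ}
    (hfconv : ConvexOn ℝ Set.univ f)
    {g x : EuclideanSpace ℝ (Fin N)} (hf : HasGradientAt f g x)
    (y : EuclideanSpace ℝ (Fin N)) :
    f x + ⟪g, y - x⟫ ≤ f y := by
  set φ : ℝ → ℝ := fun t => f (x + t • (y - x)) with hφ
  have hconv : ConvexOn ℝ Set.univ φ := by
    have h := hfconv.comp_affineMap (AffineMap.lineMap x y : ℝ →ᵃ[ℝ] EuclideanSpace ℝ (Fin N))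
    have heq : (f ∘ (AffineMap.lineMap x y : ℝ →ᵃ[ℝ] EuclideanSpace ℝ (Fin N))) = φ := by
      ext t
      simp [φ, AffineMap.lineMap_apply]
      congr 1
      module
    rw [heq] at h
    simpa using h
  have hγ : HasDerivAt (fun t : ℝ => x + t • (y - x)) (y - x) 0 :=
    by simpa using ((hasDerivAt_id (0:ℝ)).smul_const (y - x)).const_add x
  have hd : HasDerivAt φ ⟪g, y - x⟫ 0 := by
    have hl : HasFDerivAt f (InnerProductSpace.toDual ℝ (EuclideanSpace ℝ (Fin N)) g)
        ((fun t : ℝ => x + t • (y - x)) 0) := by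
      simpa using hf.hasFDerivAt
    have h2 := hl.comp_hasDerivAt (0:ℝ) hγ
    simpa [Function.comp_def, φ, InnerProductSpace.toDual_apply_apply] using h2
  have hs := hconv.le_slope_of_hasDerivWithinAt_Ioi (Set.mem_univ (0:ℝ))
    (Set.mem_univ (1:ℝ)) one_pos hd.hasDerivWithinAt
  have e1 : φ 1 = f y := by
    show f (x + (1:ℝ) • (y - x)) = f y
    congr 1
    module
  have e0 : φ 0 = f x := by
    show f (x + (0:ℝ) • (y - x)) = f x
    congr 1
    module
  rw [slope_def_field, e1, e0, sub_zero, div_one] at hs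
  linarith

lemma psd_cs_aux {N : ℕ} (Θ : EuclideanSpace ℝ (Fin N) →ₗ[ℝ] EuclideanSpace ℝ (Fin N))
    (hΘsym : Θ.IsSymmetric) {c : ℝ}
    (hΘlb : ∀ u, 0 ≤ ⟪u, Θ u⟫) (hΘub : ∀ u, ⟪u, Θ u⟫ ≤ c * ‖u‖ ^ 2)
    (hc : 0 < c)
    (u v : EuclideanSpace ℝ (Fin N)) :
    ⟪u, Θ v⟫ ≤ c * (‖u‖ * ‖v‖) := by
  have hc0 : 0 ≤ c := le_of_lt hc
  by_cases hu : u = 0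
  · simp [hu]
  by_cases hv : v = 0
  · simp [hv]
  have hun : 0 < ‖u‖ := norm_pos_iff.mpr hu
  have hvn : 0 < ‖v‖ := norm_pos_iff.mpr hv
  set t : ℝ := Real.sqrt (‖v‖ / ‖u‖) with ht
  have ht0 : 0 < t := Real.sqrt_pos.mpr (by positivity)
  have ht2 : t ^ 2 = ‖v‖ / ‖u‖ := Real.sq_sqrt (by positivity)
  have key := hΘlb (t • u - t⁻¹ • v)
  have hsym : ⟪v, Θ u⟫ = ⟪u, Θ v⟫ := by
    rw [← hΘsym u v, real_inner_comm]
  have hexp : ⟪t • u - t⁻¹ • v, Θ (t • u - t⁻¹ • v)⟫ =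
      t ^ 2 * ⟪u, Θ u⟫ - 2 * ⟪u, Θ v⟫ + t⁻¹ ^ 2 * ⟪v, Θ v⟫ := by
    simp only [map_sub, map_smul, inner_sub_left, inner_sub_right,
      real_inner_smul_left, real_inner_smul_right, hsym]
    field_simp
    ring
  rw [hexp] at key
  have h1 : ⟪u, Θ u⟫ ≤ c * ‖u‖ ^ 2 := hΘub u
  have h2 : ⟪v, Θ v⟫ ≤ c * ‖v‖ ^ 2 := hΘub v
  have ht2' : t⁻¹ ^ 2 = ‖u‖ / ‖v‖ := by
    rw [inv_pow, ht2]
    field_simp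
  have e1 : t ^ 2 * (c * ‖u‖ ^ 2) = c * (‖u‖ * ‖v‖) := by
    rw [ht2]; field_simp
  have e2 : t⁻¹ ^ 2 * (c * ‖v‖ ^ 2) = c * (‖u‖ * ‖v‖) := by
    rw [ht2']; field_simp
  have hA : 0 ≤ ⟪u, Θ u⟫ := hΘlb u
  have hB : 0 ≤ ⟪v, Θ v⟫ := hΘlb v
  nlinarith [sq_nonneg t, sq_nonneg t⁻¹, mul_le_mul_of_nonneg_left h1 (le_of_lt (by positivity : (0:ℝ) < t ^ 2)), mul_le_mul_of_nonneg_left h2 (le_of_lt (by positivity : (0:ℝ) < t⁻¹ ^ 2))]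

set_option maxHeartbeats 1000000 in
theorem stmt_15 {N : ℕ}
    (f Ψ : EuclideanSpace ℝ (Fin N) → ℝ)
    (hfconv : ConvexOn ℝ Set.univ f)
    (gradf : EuclideanSpace ℝ (Fin N) → EuclideanSpace ℝ (Fin N))
    (hf : ∀ y, HasGradientAt f (gradf y) y)
    (hΨconv : ConvexOn ℝ Set.univ Ψ)
    (LΨ : ℝ) (hΨlip : ∀ u v, |Ψ u - Ψ v| ≤ LΨ * ‖u - v‖)
    (F : EuclideanSpace ℝ (Fin N) → ℝ) (hF : F = f + Ψ)
    (xstar : EuclideanSpace ℝ (Fin N)) (hxstar : ∀ y, F xstar ≤ F y)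
    (x : EuclideanSpace ℝ (Fin N))
    (q r : ℝ) (hq : 0 ≤ q) (hr : 0 ≤ r)
    (hgq : ‖gradf x‖ ≤ q) (hxr : ‖x - xstar‖ ≤ r)
    (Θ : EuclideanSpace ℝ (Fin N) →ₗ[ℝ] EuclideanSpace ℝ (Fin N))
    (hΘsym : Θ.IsSymmetric)
    (c : ℝ) (hc : 0 < c)
    (hΘlb : ∀ u, 0 ≤ ⟪u, Θ u⟫)
    (hΘub : ∀ u, ⟪u, Θ u⟫ ≤ c * ‖u‖ ^ 2)
    (dbar : EuclideanSpace ℝ (Fin N))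
    (hdbar : ∀ d, ⟪gradf x, dbar⟫ + 1 / 2 * ⟪dbar, Θ dbar⟫ + Ψ (x + dbar) ≤
      ⟪gradf x, d⟫ + 1 / 2 * ⟪d, Θ d⟫ + Ψ (x + d)) :
    F x - F xstar ≤ (LΨ + q + c * r) * ‖dbar‖ := by
  set g := gradf x with hg
  set d := xstar - x with hd
  set e := d - dbar with he
  -- Step 1: optimality of dbar gives S ≥ 0
  have hS : 0 ≤ ⟪g, e⟫ + ⟪e, Θ dbar⟫ + Ψ (x + d) - Ψ (x + dbar) := by
    set S := ⟪g, e⟫ + ⟪e, Θ dbar⟫ + Ψ (x + d) - Ψ (x + dbar) with hSdef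
    set Q := ⟪e, Θ e⟫ with hQ
    have hQ0 : 0 ≤ Q := hΘlb e
    have key : ∀ t : ℝ, 0 < t → t ≤ 1 → -(t / 2) * Q ≤ S := by
      intro t ht0 ht1
      have hopt := hdbar (dbar + t • e)
      have hΨc : Ψ (x + (dbar + t • e)) ≤ (1 - t) * Ψ (x + dbar) + t * Ψ (x + d) := by
        have hcomb := hΨconv.2 (Set.mem_univ (x + dbar)) (Set.mem_univ (x + d))
          (by linarith : (0:ℝ) ≤ 1 - t) (le_of_lt ht0) (by ring)
        have harg : (1 - t) • (x + dbar) + t • (x + d) = x + (dbar + t • e) := by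
          rw [he, hd]; module
        rw [harg] at hcomb
        simpa [smul_eq_mul] using hcomb
      have hsym : ⟪dbar, Θ e⟫ = ⟪e, Θ dbar⟫ := by
        rw [← hΘsym dbar e]; exact real_inner_comm _ _
      have hexp : ⟪dbar + t • e, Θ (dbar + t • e)⟫ =
          ⟪dbar, Θ dbar⟫ + 2 * t * ⟪e, Θ dbar⟫ + t ^ 2 * Q := by
        simp only [map_add, map_smul, inner_add_left, inner_add_right,
          real_inner_smul_left, real_inner_smul_right, hsym, hQ]
        have : ⟪e, Θ dbar⟫ = ⟪Θ dbar, e⟫ := real_inner_comm _ _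
        ring_nf
      have hlin : ⟪g, dbar + t • e⟫ = ⟪g, dbar⟫ + t * ⟪g, e⟫ := by
        rw [inner_add_right, real_inner_smul_right]
      rw [hexp, hlin] at hopt
      have h0 : 0 ≤ t * ⟪g, e⟫ + t * ⟪e, Θ dbar⟫ + t ^ 2 / 2 * Q
          + t * (Ψ (x + d) - Ψ (x + dbar)) := by nlinarith
      have : -(t / 2) * Q * t ≤ S * t := by nlinarith
      exact le_of_mul_le_mul_right (by linarith [this]) ht0
    by_contra hneg
    push_neg at hneg
    set t := min 1 (-S / (Q + 1)) with htdef
    have htpos : 0 < t := lt_min one_pos (div_pos (by linarith) (by linarith))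
    have ht1 : t ≤ 1 := min_le_left _ _
    have ht2 : t ≤ -S / (Q + 1) := min_le_right _ _
    have hk := key t htpos ht1
    have : t * Q ≤ (-S / (Q + 1)) * Q := by
      apply mul_le_mul_of_nonneg_right ht2 hQ0
    have hfrac : (-S / (Q + 1)) * Q < -S := by
      rw [div_mul_eq_mul_div, div_lt_iff₀ (by linarith)]
      nlinarith
    linarith
  -- Step 2: gradient inequality
  have hgrad : f x + ⟪g, d⟫ ≤ f xstar := by
    have := grad_ineq_aux hfconv (hf x) xstar
    rwa [← hd] at this
  -- Step 3: bounds
  have hbound1 : -⟪g, dbar⟫ ≤ q * ‖dbar‖ := by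
    have h := abs_real_inner_le_norm g dbar
    have : -⟪g, dbar⟫ ≤ |⟪g, dbar⟫| := neg_le_abs _
    calc -⟪g, dbar⟫ ≤ ‖g‖ * ‖dbar‖ := by linarith
      _ ≤ q * ‖dbar‖ := mul_le_mul_of_nonneg_right hgq (norm_nonneg _)
  have hbound2 : ⟪d, Θ dbar⟫ ≤ c * (r * ‖dbar‖) := by
    have h := psd_cs_aux Θ hΘsym hΘlb hΘub hc d dbar
    have hdn : ‖d‖ ≤ r := by rw [hd, norm_sub_rev]; exact hxr
    calc ⟪d, Θ dbar⟫ ≤ c * (‖d‖ * ‖dbar‖) := h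
      _ ≤ c * (r * ‖dbar‖) := by
          apply mul_le_mul_of_nonneg_left _ (le_of_lt hc)
          exact mul_le_mul_of_nonneg_right hdn (norm_nonneg _)
  have hbound3 : Ψ x - Ψ (x + dbar) ≤ LΨ * ‖dbar‖ := by
    have h := hΨlip x (x + dbar)
    have : x - (x + dbar) = -dbar := by module
    rw [this, norm_neg] at h
    exact (le_abs_self _).trans h
  have hbound4 : 0 ≤ ⟪dbar, Θ dbar⟫ := hΘlb dbar
  -- expand F, e, and the inner products
  have hFx : F x = f x + Ψ x := by rw [hF]; rfl
  have hFs : F xstar = f xstar + Ψ xstar := by rw [hF]; rfl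
  have hxd : x + d = xstar := by rw [hd]; module
  rw [hxd] at hS
  have hSexp : ⟪g, e⟫ = ⟪g, d⟫ - ⟪g, dbar⟫ := by rw [he, inner_sub_right]
  have hSexp2 : ⟪e, Θ dbar⟫ = ⟪d, Θ dbar⟫ - ⟪dbar, Θ dbar⟫ := by
    rw [he, inner_sub_left]
  rw [hSexp, hSexp2] at hS
  rw [hFx, hFs]
  nlinarith [hS, hgrad, hbound1, hbound2, hbound3, hbound4]
end
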